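/- arXiv:2506.15513 — 4 statements merged into one kernel-verified Lean document; each statement's English description precedes it below -/
import Mathlib

section
/- Let α be a finite nonempty type and let p, q : α → ℝ be probability mass functions with p a > 0 for every a. Let η be a real number with 0 ≤ η ≤ 1/2, and set m = (1−η)·p + η·q (pointwise). If the chi-squared divergence satisfies χ²(q‖p) ≤ 1, then the Kullback–Leibler divergence of the mixture from the parametric distribution satisfies KL(m‖p) ≤ η² / (2·(1−η)). -/
/-!
For `0 < c ≤ 1` and `x ≥ c`, `x log x ≤ (x - 1) + (x - 1)² / (2c)`: the difference
`x log x - (x - 1)` vanishes to second order at `1` and has second derivative `1 / x ≤ 1 / c`.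
Applied to `x = r a / p a` and summed against `p`, the linear terms cancel, so
`KL(r‖p) ≤ χ²(r‖p) / (2c)` whenever `r ≥ c p`. The mixture `m` satisfies `m ≥ (1 - η) p` and
`m - p = η (q - p)`, hence `χ²(m‖p) = η² χ²(q‖p) ≤ η²`.
-/

open Finset Real

theorem log_le_two_mul_sub_one_div_add_one {x : ℝ} (hx0 : 0 < x) (hx1 : x ≤ 1) :
    log x ≤ 2 * (x - 1) / (x + 1) := by
  have h := le_log_one_add_of_nonneg (x := x⁻¹ - 1) (by linarith [one_le_inv_iff₀.2 ⟨hx0, hx1⟩])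
  rw [add_sub_cancel, log_inv] at h
  have hlower_eq : 2 * (x⁻¹ - 1) / (x⁻¹ - 1 + 2) = -(2 * (x - 1) / (x + 1)) := by
    rw [show x⁻¹ - 1 + 2 = (x + 1) / x by field_simp; ring]
    field_simp
    ring
  linarith

theorem log_le_sub_inv_div_two {x : ℝ} (hx : 1 ≤ x) : log x ≤ (x - x⁻¹) / 2 := by
  simpa [sinh_eq, exp_neg, exp_log (zero_lt_one.trans_le hx)] using
    self_le_sinh_iff.2 (log_nonneg hx)

theorem mul_log_le_sub_one_add_sq_div {c x : ℝ} (hc : 0 < c) (hc1 : c ≤ 1) (hcx : c ≤ x) :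
    x * log x ≤ x - 1 + (x - 1) ^ 2 / (2 * c) := by
  have hx0 : 0 < x := hc.trans_le hcx
  rcases le_total 1 x with h1 | h1
  · calc x * log x ≤ x * ((x - x⁻¹) / 2) := by gcongr; exact log_le_sub_inv_div_two h1
      _ = x - 1 + (x - 1) ^ 2 / 2 := by field_simp; ring
      _ ≤ x - 1 + (x - 1) ^ 2 / (2 * c) := by gcongr; linarith
  · have hgap : x - 1 + (x - 1) ^ 2 / (2 * x) - x * (2 * (x - 1) / (x + 1)) =
        (1 - x) ^ 3 / (2 * x * (x + 1)) := by
      field_simp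
      ring
    have hgap_nonneg : 0 ≤ (1 - x) ^ 3 / (2 * x * (x + 1)) := by
      have : 0 ≤ 1 - x := by linarith
      positivity
    calc x * log x ≤ x * (2 * (x - 1) / (x + 1)) := by
          gcongr; exact log_le_two_mul_sub_one_div_add_one hx0 h1
      _ ≤ x - 1 + (x - 1) ^ 2 / (2 * x) := by linarith
      _ ≤ x - 1 + (x - 1) ^ 2 / (2 * c) := by gcongr

theorem mul_log_div_le {c p r : ℝ} (hc : 0 < c) (hc1 : c ≤ 1) (hp : 0 < p) (hr : c * p ≤ r) :
    r * log (r / p) ≤ r - p + (r - p) ^ 2 / p / (2 * c) := by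
  have hcx : c ≤ r / p := (le_div_iff₀ hp).2 hr
  calc r * log (r / p) = p * (r / p * log (r / p)) := by field_simp
    _ ≤ p * (r / p - 1 + (r / p - 1) ^ 2 / (2 * c)) := by
        gcongr; exact mul_log_le_sub_one_add_sq_div hc hc1 hcx
    _ = r - p + (r - p) ^ 2 / p / (2 * c) := by field_simp

theorem sum_mul_log_div_le_sum_sq_div {α : Type*} [Fintype α] {c : ℝ} {p r : α → ℝ}
    (hc : 0 < c) (hc1 : c ≤ 1) (hp : ∀ a, 0 < p a) (hr : ∀ a, c * p a ≤ r a)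
    (hsum : ∑ a, r a = ∑ a, p a) :
    ∑ a, r a * log (r a / p a) ≤ (∑ a, (r a - p a) ^ 2 / p a) / (2 * c) :=
  calc ∑ a, r a * log (r a / p a)
      ≤ ∑ a, (r a - p a + (r a - p a) ^ 2 / p a / (2 * c)) :=
        sum_le_sum fun a _ => mul_log_div_le hc hc1 (hp a) (hr a)
    _ = (∑ a, (r a - p a) ^ 2 / p a) / (2 * c) := by
        rw [sum_add_distrib, sum_sub_distrib, hsum, sub_self, zero_add, sum_div]

theorem sum_mixture_sub_sq_div {α : Type*} [Fintype α] (p q : α → ℝ) (η : ℝ) :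
    ∑ a, ((1 - η) * p a + η * q a - p a) ^ 2 / p a = η ^ 2 * ∑ a, (q a - p a) ^ 2 / p a := by
  rw [mul_sum]
  exact sum_congr rfl fun a _ => by ring

theorem kl_collapse_general {α : Type*} [Fintype α]
    (p q : α → ℝ)
    (hp : ∀ a, 0 < p a) (hpsum : ∑ a, p a = 1)
    (hq : ∀ a, 0 ≤ q a) (hqsum : ∑ a, q a = 1)
    (η : ℝ) (hη0 : 0 ≤ η) (hη1 : η ≤ 1 / 2)
    (hchi : ∑ a, (q a - p a) ^ 2 / p a ≤ 1) :
    ∑ a, ((1 - η) * p a + η * q a) *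
        Real.log (((1 - η) * p a + η * q a) / p a) ≤ η ^ 2 / (2 * (1 - η)) := by
  have hmix_ge : ∀ a, (1 - η) * p a ≤ (1 - η) * p a + η * q a :=
    fun a => le_add_of_nonneg_right (mul_nonneg hη0 (hq a))
  have hmix_sum : ∑ a, ((1 - η) * p a + η * q a) = ∑ a, p a := by
    rw [sum_add_distrib, ← mul_sum, ← mul_sum, hpsum, hqsum]
    ring
  calc _ ≤ (∑ a, ((1 - η) * p a + η * q a - p a) ^ 2 / p a) / (2 * (1 - η)) :=
        sum_mul_log_div_le_sum_sq_div (by linarith) (by linarith) hp hmix_ge hmix_sum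
    _ = η ^ 2 * (∑ a, (q a - p a) ^ 2 / p a) / (2 * (1 - η)) := by
        rw [sum_mixture_sub_sq_div]
    _ ≤ η ^ 2 / (2 * (1 - η)) := by
        have : 0 < 1 - η := by linarith
        gcongr
        exact mul_le_of_le_one_right (sq_nonneg η) hchi

/-- **KL collapse** (Theorem 1 of the paper): if `m = (1−η)·p + η·q` is the mixture of
probability mass functions `p` and `q` with `0 ≤ η ≤ 1/2`, `p` everywhere positive,
and the chi-squared divergence `χ²(q‖p) ≤ 1`, then `KL(m‖p) ≤ η²/(2(1−η))`. -/
theorem kl_collapse {α : Type*} [Fintype α] [Nonempty α]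
    (p q : α → ℝ)
    (hp : ∀ a, 0 < p a) (hpsum : ∑ a, p a = 1)
    (hq : ∀ a, 0 ≤ q a) (hqsum : ∑ a, q a = 1)
    (η : ℝ) (hη0 : 0 ≤ η) (hη1 : η ≤ 1 / 2)
    (hchi : ∑ a, (q a - p a) ^ 2 / p a ≤ 1) :
    ∑ a, ((1 - η) * p a + η * q a) *
        Real.log (((1 - η) * p a + η * q a) / p a) ≤ η ^ 2 / (2 * (1 - η)) :=
  kl_collapse_general p q hp hpsum hq hqsum η hη0 hη1 hchi
end

section
/- Let α be a finite nonempty type and let p, q : α → ℝ be probability mass functions with p a > 0 for every a. Let η be a real number with 0 ≤ η ≤ 1/2, and set m = (1−η)·p + η·q (pointwise). Then KL(m‖p) ≤ χ²(q‖p) · η² / (2·(1−η)). -/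
/-!
Write `m = (1 - η) p + η q` and `klFun x = x log x + 1 - x`. Since `∑ m = ∑ p`, the divergence
`KL(m‖p) = ∑ m log (m / p)` equals `∑ p · klFun (m / p)`. As `klFun 1 = klFun' 1 = 0` and
`klFun'' x = 1 / x`, on `[c, ∞)` with `c ≤ 1` we get `klFun x ≤ (x - 1)² / (2c)`. Here
`m / p ≥ 1 - η =: c` because `q ≥ 0`, and `m - p = η (q - p)`, which gives the bound.
-/

open Finset Real InformationTheory

theorem klFun_le_sq_div {c x : ℝ} (hc0 : 0 < c) (hc1 : c ≤ 1) (hcx : c ≤ x) :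
    klFun x ≤ (x - 1) ^ 2 / (2 * c) := by
  set F : ℝ → ℝ := fun y ↦ (y - 1) ^ 2 / (2 * c) - klFun y
  have hF : ∀ y, 0 < y → HasDerivAt F ((y - 1) / c - log y) y := fun y hy ↦ by
    refine ((((hasDerivAt_id y).sub_const 1).pow 2).div_const (2 * c)).sub
      (hasDerivAt_klFun hy.ne') |>.congr_deriv ?_
    field_simp
    simp only [id]
    ring
  have hF_cont : ContinuousOn F (Set.Ici c) := fun y hy ↦
    (hF y (hc0.trans_le hy)).continuousAt.continuousWithinAt
  have hF_deriv : ∀ D ⊆ Set.Ici c, ∀ y ∈ interior D,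
      HasDerivWithinAt F ((y - 1) / c - log y) (interior D) y := fun D hD y hy ↦
    (hF y (hc0.trans_le (hD (interior_subset hy)))).hasDerivWithinAt
  have hF_one : F 1 = 0 := by simp [F, klFun_one]
  suffices 0 ≤ F x by simpa [F, sub_nonneg] using this
  rcases le_total x 1 with hx1 | hx1
  · have hanti : AntitoneOn F (Set.Icc c 1) := by
      refine antitoneOn_of_hasDerivWithinAt_nonpos (convex_Icc c 1)
        (hF_cont.mono Set.Icc_subset_Ici_self) (hF_deriv _ Set.Icc_subset_Ici_self) fun y hy ↦ ?_
      rw [interior_Icc] at hy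
      have hy0 : 0 < y := hc0.trans hy.1
      have h1 : (y - 1) / c ≤ (y - 1) / y := by
        rw [div_le_div_iff₀ hc0 hy0]
        nlinarith [hy.1, hy.2]
      have h2 : (y - 1) / y = 1 - y⁻¹ := by field_simp
      linarith [one_sub_inv_le_log_of_pos hy0]
    exact hF_one ▸ hanti ⟨hcx, hx1⟩ ⟨hc1, le_rfl⟩ hx1
  · have hmono : MonotoneOn F (Set.Ici 1) := by
      refine monotoneOn_of_hasDerivWithinAt_nonneg (convex_Ici 1)
        (hF_cont.mono (Set.Ici_subset_Ici.2 hc1)) (hF_deriv _ (Set.Ici_subset_Ici.2 hc1))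
        fun y hy ↦ ?_
      rw [interior_Ici] at hy
      have h1 : y - 1 ≤ (y - 1) / c :=
        le_div_self (by linarith [Set.mem_Ioi.1 hy]) hc0 hc1
      linarith [log_le_sub_one_of_pos (zero_lt_one.trans hy)]
    exact hF_one ▸ hmono Set.self_mem_Ici hx1 hx1

theorem mul_log_div_eq_mul_klFun_add {m p : ℝ} (hp : p ≠ 0) :
    m * log (m / p) = p * klFun (m / p) + (m - p) := by
  rw [klFun_apply]
  field_simp
  ring

theorem sum_mul_log_div_le {ι : Type*} (s : Finset ι) (m p : ι → ℝ) {c : ℝ} (hc0 : 0 < c)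
    (hc1 : c ≤ 1) (hp : ∀ i ∈ s, 0 < p i) (hm : ∀ i ∈ s, c * p i ≤ m i)
    (hsum : ∑ i ∈ s, m i = ∑ i ∈ s, p i) :
    ∑ i ∈ s, m i * log (m i / p i) ≤ ∑ i ∈ s, (m i - p i) ^ 2 / p i / (2 * c) := by
  calc ∑ i ∈ s, m i * log (m i / p i)
      = ∑ i ∈ s, p i * klFun (m i / p i) + ∑ i ∈ s, (m i - p i) := by
        rw [← sum_add_distrib]
        exact sum_congr rfl fun i hi ↦ mul_log_div_eq_mul_klFun_add (hp i hi).ne'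
    _ = ∑ i ∈ s, p i * klFun (m i / p i) := by rw [sum_sub_distrib, hsum, sub_self, add_zero]
    _ ≤ ∑ i ∈ s, p i * ((m i / p i - 1) ^ 2 / (2 * c)) := by
        refine sum_le_sum fun i hi ↦ mul_le_mul_of_nonneg_left ?_ (hp i hi).le
        exact klFun_le_sq_div hc0 hc1 ((le_div_iff₀ (hp i hi)).2 (hm i hi))
    _ = ∑ i ∈ s, (m i - p i) ^ 2 / p i / (2 * c) := by
        refine sum_congr rfl fun i hi ↦ ?_
        have := (hp i hi).ne'
        field_simp

theorem kl_collapse_quantitative_general {α : Type*} [Fintype α]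
    (p q : α → ℝ)
    (hp : ∀ a, 0 < p a) (hpsum : ∑ a, p a = 1)
    (hq : ∀ a, 0 ≤ q a) (hqsum : ∑ a, q a = 1)
    (η : ℝ) (hη0 : 0 ≤ η) (hη1 : η ≤ 1 / 2) :
    ∑ a, ((1 - η) * p a + η * q a) *
        Real.log (((1 - η) * p a + η * q a) / p a)
      ≤ (∑ a, (q a - p a) ^ 2 / p a) * η ^ 2 / (2 * (1 - η)) := by
  have hmix_sum : ∑ a, ((1 - η) * p a + η * q a) = ∑ a, p a := by
    rw [sum_add_distrib, ← mul_sum, ← mul_sum, hpsum, hqsum]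
    ring
  have hmix_ge : ∀ a ∈ univ, (1 - η) * p a ≤ (1 - η) * p a + η * q a := fun a _ ↦
    le_add_of_nonneg_right (mul_nonneg hη0 (hq a))
  refine (sum_mul_log_div_le univ _ p (by linarith) (by linarith) (fun a _ ↦ hp a) hmix_ge
    hmix_sum).trans_eq ?_
  rw [sum_mul, sum_div]
  refine sum_congr rfl fun a _ ↦ ?_
  ring

/-- Quantitative KL collapse: `KL((1−η)p + ηq ‖ p) ≤ χ²(q‖p) · η² / (2(1−η))`. -/
theorem kl_collapse_quantitative {α : Type*} [Fintype α] [Nonempty α]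
    (p q : α → ℝ)
    (hp : ∀ a, 0 < p a) (hpsum : ∑ a, p a = 1)
    (hq : ∀ a, 0 ≤ q a) (hqsum : ∑ a, q a = 1)
    (η : ℝ) (hη0 : 0 ≤ η) (hη1 : η ≤ 1 / 2) :
    ∑ a, ((1 - η) * p a + η * q a) *
        Real.log (((1 - η) * p a + η * q a) / p a)
      ≤ (∑ a, (q a - p a) ^ 2 / p a) * η ^ 2 / (2 * (1 - η)) :=
  kl_collapse_quantitative_general p q hp hpsum hq hqsum η hη0 hη1
end

section
/- Let α be a finite nonempty type and let p, q : α → ℝ be probability mass functions with p a > 0 for every a. For η ∈ [0,1) define m_η = (1−η)·p + η·q (pointwise, so m_η a > 0 for all a) and f(η) = Σ_a m_η a · log(m_η a / p a). Then f is twice differentiable on [0,1) and its second derivative is f''(η) = Σ_a (q a − p a)² / m_η a for every η ∈ [0,1). -/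
open Finset Real Set

/-! Along the segment `s ↦ m s = (1 - s) p + s q` each summand `m log (m / p)` has derivative
`(q - p) (log (m / p) + 1)`, since `m' = q - p` and `d/dx [x log (x / c)] = log (x / c) + 1`;
differentiating once more gives `(q - p) · (q - p) / m`. -/

lemma mix_pos {x y η : ℝ} (hx : 0 < x) (hy : 0 ≤ y) (hη : η ∈ Ico (0 : ℝ) 1) :
    0 < (1 - η) * x + η * y := by
  have := mul_pos (sub_pos.2 hη.2) hx
  have := mul_nonneg hη.1 hy
  linarith

lemma hasDerivAt_mix (x y η : ℝ) :
    HasDerivAt (fun s : ℝ => (1 - s) * x + s * y) (y - x) η := by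
  refine ((((hasDerivAt_id' η).const_sub 1).mul_const x).fun_add
    ((hasDerivAt_id' η).mul_const y)).congr_deriv ?_
  ring

lemma hasDerivAt_mul_log_div {x c : ℝ} (hx : x ≠ 0) (hc : c ≠ 0) :
    HasDerivAt (fun x => x * log (x / c)) (log (x / c) + 1) x := by
  refine ((hasDerivAt_id' x).fun_mul
    (((hasDerivAt_id' x).div_const c).log (div_ne_zero hx hc))).congr_deriv ?_
  field_simp

lemma hasDerivAt_log_mix_div {x y c η : ℝ} (hm : (1 - η) * x + η * y ≠ 0) (hc : c ≠ 0) :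
    HasDerivAt (fun s : ℝ => log (((1 - s) * x + s * y) / c))
      ((y - x) / ((1 - η) * x + η * y)) η := by
  refine (((hasDerivAt_mix x y η).div_const c).log (div_ne_zero hm hc)).congr_deriv ?_
  field_simp

lemma hasDerivAt_mix_mul_log_div {x y c η : ℝ} (hm : (1 - η) * x + η * y ≠ 0) (hc : c ≠ 0) :
    HasDerivAt (fun s : ℝ => ((1 - s) * x + s * y) * log (((1 - s) * x + s * y) / c))
      ((y - x) * (log (((1 - η) * x + η * y) / c) + 1)) η := by
  rw [mul_comm (y - x)]
  exact (hasDerivAt_mul_log_div hm hc).comp η (hasDerivAt_mix x y η)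

lemma hasDerivAt_deriv_mix_mul_log_div {x y c η : ℝ} (hm : (1 - η) * x + η * y ≠ 0)
    (hc : c ≠ 0) :
    HasDerivAt (fun s : ℝ => (y - x) * (log (((1 - s) * x + s * y) / c) + 1))
      ((y - x) ^ 2 / ((1 - η) * x + η * y)) η := by
  rw [sq, mul_div_assoc]
  exact ((hasDerivAt_log_mix_div hm hc).add_const 1).const_mul (y - x)

theorem kl_mix_second_deriv_general {α : Type*} [Fintype α]
    (p q : α → ℝ)
    (hp : ∀ a, 0 < p a)
    (hq : ∀ a, 0 ≤ q a) :
    (∀ η ∈ Set.Ico (0 : ℝ) 1, ∀ a, 0 < (1 - η) * p a + η * q a) ∧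
    ∃ f' : ℝ → ℝ,
      ∀ η ∈ Set.Ico (0 : ℝ) 1,
        HasDerivWithinAt
          (fun s => ∑ a, ((1 - s) * p a + s * q a) *
            Real.log (((1 - s) * p a + s * q a) / p a))
          (f' η) (Set.Ico (0 : ℝ) 1) η ∧
        HasDerivWithinAt f'
          (∑ a, (q a - p a) ^ 2 / ((1 - η) * p a + η * q a))
          (Set.Ico (0 : ℝ) 1) η := by
  have hm η (hη : η ∈ Ico (0 : ℝ) 1) a : 0 < (1 - η) * p a + η * q a := mix_pos (hp a) (hq a) hη
  refine ⟨hm, fun η => ∑ a, (q a - p a) * (log (((1 - η) * p a + η * q a) / p a) + 1),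
    fun η hη => ⟨?_, ?_⟩⟩
  · exact (HasDerivAt.fun_sum fun a _ =>
      hasDerivAt_mix_mul_log_div (hm η hη a).ne' (hp a).ne').hasDerivWithinAt
  · exact (HasDerivAt.fun_sum fun a _ =>
      hasDerivAt_deriv_mix_mul_log_div (hm η hη a).ne' (hp a).ne').hasDerivWithinAt

/-- The map `f(η) = KL((1−η)p + ηq ‖ p)` is twice differentiable on `[0,1)`
(with the mixture everywhere positive there), and its second derivative equals
`∑ a, (q a − p a)² / m_η a` for every `η ∈ [0,1)`. -/
theorem kl_mix_second_deriv {α : Type*} [Fintype α] [Nonempty α]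
    (p q : α → ℝ)
    (hp : ∀ a, 0 < p a) (hpsum : ∑ a, p a = 1)
    (hq : ∀ a, 0 ≤ q a) (hqsum : ∑ a, q a = 1) :
    (∀ η ∈ Set.Ico (0 : ℝ) 1, ∀ a, 0 < (1 - η) * p a + η * q a) ∧
    ∃ f' : ℝ → ℝ,
      ∀ η ∈ Set.Ico (0 : ℝ) 1,
        HasDerivWithinAt
          (fun s => ∑ a, ((1 - s) * p a + s * q a) *
            Real.log (((1 - s) * p a + s * q a) / p a))
          (f' η) (Set.Ico (0 : ℝ) 1) η ∧
        HasDerivWithinAt f'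
          (∑ a, (q a - p a) ^ 2 / ((1 - η) * p a + η * q a))
          (Set.Ico (0 : ℝ) 1) η :=
  kl_mix_second_deriv_general p q hp hq
end

section
/- Let α be a finite nonempty type and let p, q : α → ℝ be probability mass functions with p a > 0 for every a. For η ∈ [0,1) define m_η = (1−η)·p + η·q and f(η) = Σ_a m_η a · log(m_η a / p a). Then for every η ∈ [0,1), the second derivative satisfies f''(η) = Σ_a (q a − p a)² / m_η a ≤ χ²(q‖p) / (1−η). -/
open Finset Real Set

/-!
With `m_η = (1 - η) p + η q`, each summand `m_η a * log (m_η a / p a)` has derivative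
`(q a - p a) * (log (m_η a / p a) + 1)` and second derivative `(q a - p a)² / m_η a`, since
`η ↦ m_η a` is affine with slope `q a - p a`. The bound follows termwise from
`m_η a ≥ (1 - η) p a`.
-/

lemma hasDerivAt_one_sub_mul_add_mul (u v s : ℝ) :
    HasDerivAt (fun s : ℝ => (1 - s) * u + s * v) (v - u) s := by
  refine ((((hasDerivAt_id s).const_sub 1).mul_const u).add
    ((hasDerivAt_id s).mul_const v)).congr_deriv ?_
  ring

lemma HasDerivAt.log_div_const {f : ℝ → ℝ} {f' c x : ℝ} (hf : HasDerivAt f f' x)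
    (hx : f x ≠ 0) (hc : c ≠ 0) :
    HasDerivAt (fun s => Real.log (f s / c)) (f' / f x) x := by
  refine ((hf.div_const c).log (div_ne_zero hx hc)).congr_deriv ?_
  field_simp

lemma HasDerivAt.mul_log_div_const {f : ℝ → ℝ} {f' c x : ℝ} (hf : HasDerivAt f f' x)
    (hx : f x ≠ 0) (hc : c ≠ 0) :
    HasDerivAt (fun s => f s * Real.log (f s / c)) (f' * (Real.log (f x / c) + 1)) x := by
  refine (hf.mul (HasDerivAt.log_div_const hf hx hc)).congr_deriv ?_
  field_simp

lemma div_one_sub_mul_add_mul_le {u v η y : ℝ} (hu : 0 < u) (hv : 0 ≤ v)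
    (hη₀ : 0 ≤ η) (hη₁ : η < 1) (hy : 0 ≤ y) :
    y / ((1 - η) * u + η * v) ≤ y / u / (1 - η) := by
  rw [div_div, mul_comm u]
  exact div_le_div_of_nonneg_left hy (mul_pos (by linarith) hu)
    (le_add_of_nonneg_right (mul_nonneg hη₀ hv))

theorem kl_mix_second_deriv_bound_general {α : Type*} [Fintype α]
    (p q : α → ℝ)
    (hp : ∀ a, 0 < p a)
    (hq : ∀ a, 0 ≤ q a) :
    ∃ f' f'' : ℝ → ℝ,
      ∀ η ∈ Set.Ico (0 : ℝ) 1,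
        HasDerivWithinAt
          (fun s => ∑ a, ((1 - s) * p a + s * q a) *
            Real.log (((1 - s) * p a + s * q a) / p a))
          (f' η) (Set.Ico (0 : ℝ) 1) η ∧
        HasDerivWithinAt f' (f'' η) (Set.Ico (0 : ℝ) 1) η ∧
        f'' η = ∑ a, (q a - p a) ^ 2 / ((1 - η) * p a + η * q a) ∧
        f'' η ≤ (∑ a, (q a - p a) ^ 2 / p a) / (1 - η) := by
  refine ⟨fun s => ∑ a, (q a - p a) * (log (((1 - s) * p a + s * q a) / p a) + 1),
    fun s => ∑ a, (q a - p a) ^ 2 / ((1 - s) * p a + s * q a), ?_⟩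
  rintro η ⟨hη₀, hη₁⟩
  have hmix_ne (a : α) : (1 - η) * p a + η * q a ≠ 0 :=
    (add_pos_of_pos_of_nonneg (mul_pos (by linarith) (hp a)) (mul_nonneg hη₀ (hq a))).ne'
  have hmix (a : α) := hasDerivAt_one_sub_mul_add_mul (p a) (q a) η
  have hderiv₁ := HasDerivAt.fun_sum (u := univ) fun a _ =>
    HasDerivAt.mul_log_div_const (hmix a) (hmix_ne a) (hp a).ne'
  have hderiv₂ := HasDerivAt.fun_sum (u := univ) fun a _ =>
    ((HasDerivAt.log_div_const (hmix a) (hmix_ne a) (hp a).ne').add_const 1).const_mul (q a - p a)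
  refine ⟨hderiv₁.hasDerivWithinAt, ?_, rfl, ?_⟩
  · exact (hderiv₂.congr_deriv (sum_congr rfl fun a _ => by ring)).hasDerivWithinAt
  · rw [sum_div]
    exact sum_le_sum fun a _ =>
      div_one_sub_mul_add_mul_le (hp a) (hq a) hη₀ hη₁ (sq_nonneg _)

/-- Second-derivative bound for `f(η) = KL((1−η)p + ηq ‖ p)` on `[0,1)`:
`f''(η) = ∑ a, (q a − p a)² / m_η a ≤ χ²(q‖p) / (1−η)`. -/
theorem kl_mix_second_deriv_bound {α : Type*} [Fintype α] [Nonempty α]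
    (p q : α → ℝ)
    (hp : ∀ a, 0 < p a) (hpsum : ∑ a, p a = 1)
    (hq : ∀ a, 0 ≤ q a) (hqsum : ∑ a, q a = 1) :
    ∃ f' f'' : ℝ → ℝ,
      ∀ η ∈ Set.Ico (0 : ℝ) 1,
        HasDerivWithinAt
          (fun s => ∑ a, ((1 - s) * p a + s * q a) *
            Real.log (((1 - s) * p a + s * q a) / p a))
          (f' η) (Set.Ico (0 : ℝ) 1) η ∧
        HasDerivWithinAt f' (f'' η) (Set.Ico (0 : ℝ) 1) η ∧
        f'' η = ∑ a, (q a - p a) ^ 2 / ((1 - η) * p a + η * q a) ∧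
        f'' η ≤ (∑ a, (q a - p a) ^ 2 / p a) / (1 - η) :=
  kl_mix_second_deriv_bound_general p q hp hq
end
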